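/- Fix a squarefree d ≡ 2 mod 4 and an ideal class [a] in the class group of ℤ[√(-d)]. The number of primitive ideals b in the class [a] with N(b) ≤ Y·√d is O(1 + Y), with an absolute implied constant. -/

import Mathlib

open scoped Zsqrtd

/-- An ideal of `ℤ√d` is primitive if no rational integer `n > 1` divides it. -/
def IsPrimitiveIdeal {d : ℤ} (a : Ideal (ℤ√d)) : Prop :=
  ∀ n : ℕ, 1 < n → ¬ a ≤ Ideal.span {(n : ℤ√d)}

/-- The norm of an ideal `a`, i.e. the cardinality of `O/a`. -/
noncomputable def idealNorm {d : ℤ} (a : Ideal (ℤ√d)) : ℕ :=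
  Nat.card ((ℤ√d) ⧸ a)

/-- Two nonzero ideals lie in the same ideal class if `(x)·b = (y)·a` for some
nonzero `x, y`. -/
def SameIdealClass {d : ℤ} (a b : Ideal (ℤ√d)) : Prop :=
  ∃ x y : ℤ√d, x ≠ 0 ∧ y ≠ 0 ∧
    Ideal.span {x} * b = Ideal.span {y} * a

/-!
Fix one ideal `a₀` of the family, with `n₀ = N(a₀)` and `a₀ = {x + y√-d : n₀ ∣ x - r₀ y}`.
Since `d` is squarefree and `d ≡ 2 (mod 4)`, every primitive ideal satisfies `b b̄ = (N(b))`, so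
for `b` in the class of `a₀` the ideal `b ā₀` is principal, generated by some `w = x + y√-d` with
`y ≥ 0`. Then `(n₀) b = (w) a₀`, `N(w) ≤ N(b) n₀ ≤ Y √d n₀`, and `w̄ ∈ a₀` gives `n₀ ∣ x + r₀ y`.
Primitive ideals that differ by a rational factor are equal, so `b ↦ w` is injective and `y = 0`
only for `b = a₀`. The other `w` have `0 < y ≤ √(Y n₀ / √d) ≤ Y` and, for each `y`, `x` in one
residue class mod `n₀` with `|x| ≤ √(Y √d n₀)`; this leaves at most `2Y + Y` of them.
-/

namespace Ideal

variable {R : Type*} [CommRing R]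

def conj [StarRing R] (I : Ideal R) : Ideal R := I.map (starRingAut : R ≃+* R)

section Conj

variable [StarRing R]

theorem mem_conj {I : Ideal R} {z : R} : z ∈ I.conj ↔ star z ∈ I := by
  rw [conj, mem_map_of_equiv]
  exact ⟨by rintro ⟨x, hx, rfl⟩; simpa using hx, fun h => ⟨star z, h, by simp⟩⟩

theorem conj_mul (I J : Ideal R) : (I * J).conj = I.conj * J.conj :=
  Ideal.map_mul _ I J

theorem conj_span_singleton (x : R) : (span {x}).conj = span {star x} := by
  rw [conj, map_span, Set.image_singleton]
  rfl

theorem conj_conj (I : Ideal R) : I.conj.conj = I := by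
  ext
  simp [mem_conj]

end Conj

theorem le_span_singleton_of_span_singleton_mul_eq {p q : R} (hpq : IsCoprime p q) {I J : Ideal R}
    (h : span {p} * I = span {q} * J) : J ≤ span {p} := by
  intro z hz
  obtain ⟨u, v, huv⟩ := hpq
  have hqz : q * z ∈ span {p} * I := by
    rw [h]
    exact mem_span_singleton_mul.mpr ⟨z, hz, rfl⟩
  rw [show z = u * (p * z) + v * (q * z) by linear_combination (-z) * huv]
  exact add_mem (mul_mem_left _ _ (mul_mem_right _ _ (mem_span_singleton_self p)))
    (mul_mem_left _ _ (mul_le_left hqz))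

theorem isPrincipal_of_span_singleton_mul_eq [IsDomain R] {x y : R} (hx : x ≠ 0) {I : Ideal R}
    (h : span {x} * I = span {y}) : I.IsPrincipal := by
  obtain ⟨w, hw, rfl⟩ := mem_span_singleton_mul.mp (h ▸ mem_span_singleton_self y)
  rw [← span_singleton_mul_span_singleton, span_singleton_mul_right_inj hx] at h
  exact ⟨w, h⟩

end Ideal

open Finset in
theorem Int.card_Icc_ceil_floor_le {a b : ℝ} (h : a ≤ b) : (#(Icc ⌈a⌉ ⌊b⌋) : ℝ) ≤ b - a + 1 := by
  rw [Int.card_Icc, ← Int.cast_natCast, Int.toNat_eq_max, Int.cast_max]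
  refine max_le ?_ (by rw [Int.cast_zero]; linarith)
  push_cast
  linarith [Int.floor_le b, Int.le_ceil a]

theorem Nat.card_le_ncard_add_one_of_injective {α β : Type*} {f : α → β} (hf : f.Injective)
    {s : Set β} (hs : s.Finite) {a₀ : α} (h : ∀ a, f a ∉ s → a = a₀) :
    Nat.card α ≤ s.ncard + 1 := by
  classical
  have := hs.to_subtype
  let g : α → Option s := fun a => if ha : f a ∈ s then some ⟨f a, ha⟩ else none
  refine (Nat.card_le_card_of_injective g fun a a' haa' => ?_).trans_eq Finite.card_option
  simp only [g] at haa'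
  split_ifs at haa' with ha ha' ha''
  · exact hf (congrArg Subtype.val (Option.some_injective _ haa'))
  · exact (h a ha).trans (h a' ha'').symm

theorem sqrt_div_mul_two_mul_sqrt_div_add_one_le {D n Y : ℝ} (hD : 0 < D) (hn : 0 < n)
    (hnY : n ≤ Y * √D) :
    √(Y * √D * n / D) * (2 * √(Y * √D * n) / n + 1) ≤ 3 * Y := by
  have hsD : 0 < √D := Real.sqrt_pos.mpr hD
  have hY : 0 < Y := pos_of_mul_pos_left (hn.trans_le hnY) hsD.le
  have hM : 0 ≤ Y * √D * n := by positivity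
  have hBR : √(Y * √D * n / D) * √(Y * √D * n) = Y * n := by
    rw [Real.sqrt_div' _ hD.le, div_mul_eq_mul_div, Real.mul_self_sqrt hM]
    field_simp
  have hB : √(Y * √D * n / D) ≤ Y := by
    refine Real.sqrt_le_iff.mpr ⟨hY.le, ?_⟩
    rw [div_le_iff₀ hD]
    nlinarith [Real.mul_self_sqrt hD.le, mul_le_mul_of_nonneg_left hnY (by positivity : 0 ≤ Y * √D)]
  calc √(Y * √D * n / D) * (2 * √(Y * √D * n) / n + 1)
      = 2 * (√(Y * √D * n / D) * √(Y * √D * n)) / n + √(Y * √D * n / D) := by ring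
    _ ≤ 3 * Y := by
      rw [hBR, mul_div_assoc, mul_div_assoc, div_self hn.ne', mul_one]
      linarith

open Ideal

namespace Zsqrtd

section

variable {d : ℤ}

theorem _root_.IsPrimitiveIdeal.isUnit_of_le_span_intCast {b : Ideal (ℤ√d)}
    (hb : IsPrimitiveIdeal b) {k : ℤ} (hk : b ≤ span {(k : ℤ√d)}) : IsUnit k := by
  rw [Int.isUnit_iff_natAbs_eq]
  by_contra hk1
  rcases Nat.lt_or_gt_of_ne hk1 with hk0 | hk1
  · obtain rfl : k = 0 := by omega
    exact hb 2 one_lt_two (hk.trans (by simp))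
  · refine hb _ hk1 (hk.trans (span_singleton_le_span_singleton.mpr ?_))
    simp

theorem _root_.IsPrimitiveIdeal.exists_mk_one_mem {b : Ideal (ℤ√d)} (hb : IsPrimitiveIdeal b) :
    ∃ r : ℤ, (⟨r, 1⟩ : ℤ√d) ∈ b := by
  let imParts : Ideal ℤ := (b.restrictScalars ℤ).map
    (AddMonoidHom.mk' im fun _ _ => rfl).toIntLinearMap
  set g := Submodule.IsPrincipal.generator imParts
  have hdvd_im : ∀ z ∈ b, g ∣ z.im := fun z hz =>
    (Submodule.IsPrincipal.mem_iff_generator_dvd imParts).mp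
      (Submodule.mem_map_of_mem (p := b.restrictScalars ℤ) hz)
  -- the real part of `z` is the imaginary part of `z * √d`
  have hb_le : b ≤ span {(g : ℤ√d)} := fun z hz => by
    refine mem_span_singleton.mpr ((intCast_dvd g z).mpr ⟨?_, hdvd_im z hz⟩)
    simpa using hdvd_im _ (b.mul_mem_right sqrtd hz)
  obtain ⟨z, hz, hzg⟩ := Submodule.mem_map.mp (Submodule.IsPrincipal.generator_mem imParts)
  rw [Submodule.restrictScalars_mem] at hz
  change z.im = g at hzg
  rcases Int.isUnit_iff.mp (hb.isUnit_of_le_span_intCast hb_le) with hg | hg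
  · exact ⟨z.re, by convert hz using 1; ext <;> simp [hzg, hg]⟩
  · exact ⟨-z.re, by convert b.neg_mem hz using 1; ext <;> simp [hzg, hg]⟩

theorem exists_mem_iff_dvd_of_mk_one_mem {b : Ideal (ℤ√d)} {r : ℤ} (hr : (⟨r, 1⟩ : ℤ√d) ∈ b) :
    ∃ n : ℕ, ∀ z : ℤ√d, z ∈ b ↔ (n : ℤ) ∣ z.re - r * z.im := by
  let intPart : Ideal ℤ := b.comap (Int.castRingHom (ℤ√d))
  refine ⟨(Submodule.IsPrincipal.generator intPart).natAbs, fun z => ?_⟩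
  have hz : z = z.im * ⟨r, 1⟩ + ((z.re - r * z.im : ℤ) : ℤ√d) := by
    ext
    · simp only [re_add, re_intCast, smul_val]
      ring
    · simp only [im_add, im_intCast, smul_val]
      ring
  calc z ∈ b ↔ ((z.re - r * z.im : ℤ) : ℤ√d) ∈ b := by
        conv_lhs => rw [hz]
        exact Submodule.add_mem_iff_right _ (b.mul_mem_left _ hr)
    _ ↔ _ := by rw [Int.natAbs_dvd, ← Submodule.IsPrincipal.mem_iff_generator_dvd, mem_comap]; rfl

theorem dvd_sq_sub_of_mem_iff {b : Ideal (ℤ√d)} {n : ℕ} {r : ℤ}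
    (hb : ∀ z : ℤ√d, z ∈ b ↔ (n : ℤ) ∣ z.re - r * z.im) : (n : ℤ) ∣ r ^ 2 - d := by
  have hr : (⟨r, 1⟩ : ℤ√d) ∈ b := (hb _).mpr (by simp)
  simpa [sq, sub_eq_add_neg] using (hb _).mp (b.mul_mem_right (star ⟨r, 1⟩) hr)

theorem idealNorm_eq_of_mem_iff {b : Ideal (ℤ√d)} {n : ℕ} {r : ℤ}
    (hb : ∀ z : ℤ√d, z ∈ b ↔ (n : ℤ) ∣ z.re - r * z.im) : idealNorm b = n := by
  have hsq : (-r : ZMod n) * -r = d := by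
    rw [neg_mul_neg, ← sub_eq_zero, ← sq]
    exact_mod_cast (ZMod.intCast_zmod_eq_zero_iff_dvd _ n).mpr (dvd_sq_sub_of_mem_iff hb)
  let f : ℤ√d →+* ZMod n := lift ⟨-r, hsq⟩
  have hf : ∀ z, f z = ((z.re - r * z.im : ℤ) : ZMod n) := fun z => by
    simp only [f, lift_apply_apply, Int.cast_sub, Int.cast_mul]
    ring
  have hker : RingHom.ker f = b := by
    ext z
    rw [RingHom.mem_ker, hf, ZMod.intCast_zmod_eq_zero_iff_dvd, hb]
  have hsurj : Function.Surjective f := fun x => by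
    obtain ⟨k, rfl⟩ := ZMod.intCast_surjective x
    exact ⟨k, by simp [hf]⟩
  rw [idealNorm, ← hker, Nat.card_congr (RingHom.quotientKerEquivOfSurjective hsurj).toEquiv,
    Nat.card_zmod]

theorem _root_.IsPrimitiveIdeal.exists_mem_iff_dvd_idealNorm {b : Ideal (ℤ√d)}
    (hb : IsPrimitiveIdeal b) :
    ∃ r : ℤ, ∀ z : ℤ√d, z ∈ b ↔ (idealNorm b : ℤ) ∣ z.re - r * z.im := by
  obtain ⟨r, hr⟩ := hb.exists_mk_one_mem
  obtain ⟨n, hn⟩ := exists_mem_iff_dvd_of_mk_one_mem hr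
  exact ⟨r, by rwa [idealNorm_eq_of_mem_iff hn]⟩

theorem isDomain_of_neg (hd : d < 0) : IsDomain (ℤ√d) :=
  have : NoZeroDivisors (ℤ√d) := ⟨fun {a b} hab => by
    simpa [norm_eq_zero_iff hd] using congrArg norm hab⟩
  NoZeroDivisors.to_isDomain _

theorem mul_conj_eq_span_of_mem_iff {b : Ideal (ℤ√d)} {n : ℕ} {r c u v w : ℤ}
    (hb : ∀ z : ℤ√d, z ∈ b ↔ (n : ℤ) ∣ z.re - r * z.im) (hc : r ^ 2 - d = n * c)
    (huvw : n * u + 2 * r * v + c * w = 1) : b * b.conj = span {(n : ℤ√d)} := by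
  have hconj : ∀ z : ℤ√d, z ∈ b.conj ↔ (n : ℤ) ∣ z.re + r * z.im := fun z => by
    rw [mem_conj, hb]
    simp
  apply _root_.le_antisymm
  · refine mul_le.mpr fun i hi j hj => ?_
    rw [hb] at hi
    rw [hconj] at hj
    rw [mem_span_singleton, ← Int.cast_natCast, intCast_dvd]
    constructor
    · have : (i * j).re = (i.re - r * i.im) * j.re + r * i.im * (j.re + r * j.im)
          - (r ^ 2 - d) * (i.im * j.im) := by simp only [re_mul]; ring
      rw [this]
      exact dvd_sub (dvd_add (hi.mul_right _) (hj.mul_left _))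
        ((dvd_sq_sub_of_mem_iff hb).mul_right _)
    · have : (i * j).im = (i.re - r * i.im) * j.im + i.im * (j.re + r * j.im) := by simp only [im_mul]; ring
      rw [this]
      exact dvd_add (hi.mul_right _) (hj.mul_left _)
  · have hn : (n : ℤ√d) ∈ b := (hb _).mpr (by simp)
    have hn' : (n : ℤ√d) ∈ b.conj := (hconj _).mpr (by simp)
    have hα : (⟨r, 1⟩ : ℤ√d) ∈ b := (hb _).mpr (by simp)
    have hα' : (⟨r, -1⟩ : ℤ√d) ∈ b.conj := (hconj _).mpr (by simp)
    -- `n = n (n u + 2 r v + c w)` with `2 n r = n ᾱ + α n` and `n c = α ᾱ`, where `α = r + √d`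
    have key : (n : ℤ√d) =
        u * (n * n) + v * (n * ⟨r, -1⟩ + ⟨r, 1⟩ * n) + w * (⟨r, 1⟩ * ⟨r, -1⟩) := by
      ext
      · simp only [re_natCast, im_natCast, re_add, re_mul, im_mul, re_intCast, im_intCast,
          nsmul_val, mul_neg, mul_one, mul_zero, zero_mul, add_zero]
        linear_combination (-(n : ℤ)) * huvw - w * hc
      · simp
    rw [span_le, Set.singleton_subset_iff, SetLike.mem_coe, key]
    exact add_mem (add_mem (mul_mem_left _ _ (mul_mem_mul hn hn'))
      (mul_mem_left _ _ (add_mem (mul_mem_mul hn hα') (mul_mem_mul hα hn'))))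
      (mul_mem_left _ _ (mul_mem_mul hα hα'))

theorem _root_.IsPrimitiveIdeal.eq_of_span_intCast_mul_eq [IsDomain (ℤ√d)]
    {b b' : Ideal (ℤ√d)} (hb : IsPrimitiveIdeal b) (hb' : IsPrimitiveIdeal b') {m n : ℤ}
    (hm : m ≠ 0) (h : span {(m : ℤ√d)} * b = span {(n : ℤ√d)} * b') : b = b' := by
  obtain ⟨g, p, q, hg, hpq, rfl, rfl⟩ := Int.exists_gcd_one' (Int.gcd_pos_of_ne_zero_left n hm)
  have hpq : IsCoprime (p : ℤ√d) q := (Int.isCoprime_iff_gcd_eq_one.mpr hpq).intCast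
  have hg0 : (g : ℤ√d) ≠ 0 := Nat.cast_ne_zero.mpr hg.ne'
  simp only [Int.cast_mul, Int.cast_natCast] at h
  rw [mul_comm _ (g : ℤ√d), mul_comm _ (g : ℤ√d), ← span_singleton_mul_span_singleton,
    ← span_singleton_mul_span_singleton, mul_assoc, mul_assoc,
    span_singleton_mul_right_inj hg0] at h
  have hp := hb'.isUnit_of_le_span_intCast (le_span_singleton_of_span_singleton_mul_eq hpq h)
  have hq :=
    hb.isUnit_of_le_span_intCast (le_span_singleton_of_span_singleton_mul_eq hpq.symm h.symm)
  rwa [span_singleton_eq_top.mpr (by simpa using hp.map (Int.castRingHom (ℤ√d))),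
    span_singleton_eq_top.mpr (by simpa using hq.map (Int.castRingHom (ℤ√d))), top_mul,
    top_mul] at h

theorem exists_mul_conj_eq_span_of_sameIdealClass [IsDomain (ℤ√d)] {a a₀ b : Ideal (ℤ√d)}
    {c : ℤ√d} (ha₀ : a₀ * a₀.conj = span {c}) (ha₀a : SameIdealClass a a₀)
    (hba : SameIdealClass a b) : ∃ w, b * a₀.conj = span {w} ∧ 0 ≤ w.im := by
  obtain ⟨x, y, hx, -, hxy⟩ := hba
  obtain ⟨x₀, y₀, -, hy₀, hxy₀⟩ := ha₀a
  have hprin : span {y₀ * x} * (b * a₀.conj) = span {y * x₀ * c} := by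
    simp only [← span_singleton_mul_span_singleton, ← ha₀]
    calc span {y₀} * span {x} * (b * a₀.conj) = span {y₀} * (span {x} * b) * a₀.conj := by ring
      _ = span {y} * (span {x₀} * a₀) * a₀.conj := by rw [hxy, hxy₀]; ring
      _ = _ := by ring
  obtain ⟨w, hw⟩ := (isPrincipal_of_span_singleton_mul_eq (mul_ne_zero hy₀ hx) hprin).principal
  rcases le_total 0 w.im with h | h
  · exact ⟨w, hw, h⟩
  · exact ⟨-w, by rw [span_singleton_neg]; exact hw, by simpa using h⟩

theorem norm_dvd_of_mul_conj_eq_span {a b : Ideal (ℤ√d)} {m n : ℕ} {w : ℤ√d}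
    (hb : b * b.conj = span {(m : ℤ√d)}) (ha : a * a.conj = span {(n : ℤ√d)})
    (hw : b * a.conj = span {w}) : w.norm ∣ m * n := by
  have hspan : span {(w.norm : ℤ√d)} = span {((m * n : ℤ) : ℤ√d)} := by
    calc span {(w.norm : ℤ√d)} = (b * a.conj) * (b * a.conj).conj := by
          rw [hw, conj_span_singleton, span_singleton_mul_span_singleton, norm_eq_mul_conj]
      _ = (b * b.conj) * (a * a.conj) := by rw [Ideal.conj_mul, Ideal.conj_conj]; ring
      _ = _ := by rw [hb, ha, span_singleton_mul_span_singleton]; push_cast; rfl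
  rw [← intCast_dvd_intCast (d := d), ← span_singleton_le_span_singleton, hspan]

theorem _root_.IsPrimitiveIdeal.idealNorm_pos (hd : d < 0) {b : Ideal (ℤ√d)}
    (hb : IsPrimitiveIdeal b) : 0 < idealNorm b := by
  obtain ⟨r, hr⟩ := hb.exists_mem_iff_dvd_idealNorm
  refine Nat.pos_of_ne_zero fun h0 => ?_
  have := dvd_sq_sub_of_mem_iff hr
  rw [h0, Nat.cast_zero, zero_dvd_iff] at this
  nlinarith [sq_nonneg r]

end

def boxPointsModEq (d : ℤ) (n : ℕ) (r : ℤ) (B R : ℝ) : Set (ℤ√d) :=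
  {w | 0 < w.im ∧ (w.im : ℝ) ≤ B ∧ |(w.re : ℝ)| ≤ R ∧ (n : ℤ) ∣ w.re + r * w.im}

open Finset in
theorem boxPointsModEq_finite_and_ncard_le {d : ℤ} {n : ℕ} (hn : 0 < n) (r : ℤ) {B R : ℝ}
    (hB : 0 ≤ B) (hR : 0 ≤ R) :
    (boxPointsModEq d n r B R).Finite ∧
      ((boxPointsModEq d n r B R).ncard : ℝ) ≤ B * (2 * R / n + 1) := by
  have hn' : (0 : ℝ) < n := by exact_mod_cast hn
  -- a point is determined by its imaginary part `y` and the quotient `q = (re + r y) / n`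
  let F : Finset (ℤ√d) := (Icc 1 ⌊B⌋).biUnion fun y =>
    (Icc ⌈(r * y - R) / n⌉ ⌊(r * y + R) / n⌋).image fun q => ⟨n * q - r * y, y⟩
  have hsub : boxPointsModEq d n r B R ⊆ F := by
    rintro w ⟨him, himB, hre, q, hq⟩
    have hq' : (n * q : ℝ) = w.re + r * w.im := by exact_mod_cast hq.symm
    have hre' := abs_le.mp hre
    simp only [F, coe_biUnion, coe_image, coe_Icc, Set.mem_iUnion, Set.mem_image, Set.mem_Icc]
    refine ⟨w.im, ⟨him, Int.le_floor.mpr himB⟩, q, ⟨Int.ceil_le.mpr ?_, Int.le_floor.mpr ?_⟩, ?_⟩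
    · rw [div_le_iff₀ hn']
      linarith
    · rw [le_div_iff₀ hn']
      linarith
    · exact Zsqrtd.ext (by dsimp only; linarith) rfl
  have hcard : (#F : ℝ) ≤ B * (2 * R / n + 1) := calc
    (#F : ℝ) ≤ ∑ y ∈ Icc 1 ⌊B⌋, (#(Icc ⌈(r * y - R) / n⌉ ⌊(r * y + R) / n⌋) : ℝ) := by
      rw [← Nat.cast_sum]
      exact Nat.cast_le.mpr (card_biUnion_le.trans (sum_le_sum fun y _ => card_image_le))
    _ ≤ ∑ y ∈ Icc 1 ⌊B⌋, (2 * R / n + 1) := sum_le_sum fun y _ =>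
      (Int.card_Icc_ceil_floor_le (by gcongr; linarith)).trans_eq (by ring)
    _ ≤ B * (2 * R / n + 1) := by
      rw [sum_const, nsmul_eq_mul, Int.card_Icc, add_sub_cancel_right, Int.floor_toNat]
      gcongr
      exact Nat.floor_le hB
  refine ⟨F.finite_toSet.subset hsub, ?_⟩
  calc ((boxPointsModEq d n r B R).ncard : ℝ) ≤ #F := by
        exact_mod_cast (Set.ncard_le_ncard hsub F.finite_toSet).trans_eq (Set.ncard_coe_finset F)
    _ ≤ _ := hcard

section

variable {d : ℕ}

theorem exists_bezout_of_squarefree (hsf : Squarefree d) (hd4 : d % 4 = 2) {n : ℕ} {r c : ℤ}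
    (hc : r ^ 2 + d = n * c) : ∃ u v w : ℤ, n * u + 2 * r * v + c * w = 1 := by
  have hc0 : c ≠ 0 := by
    rintro rfl
    have : (0 : ℤ) < d := by omega
    nlinarith [sq_nonneg r]
  have hcop : IsCoprime ((Int.gcd n (2 * r) : ℕ) : ℤ) c := by
    refine isCoprime_of_prime_dvd (fun h => hc0 h.2) fun p hp hpg hpc => ?_
    have hpn : p ∣ n := hpg.trans (Int.gcd_dvd_left _ _)
    have hpr : p ∣ 2 * r := hpg.trans (Int.gcd_dvd_right _ _)
    have hpp : p * p ∣ r ^ 2 + d := hc ▸ mul_dvd_mul hpn hpc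
    by_cases hp2 : 2 ∣ p
    · -- then `4 ∣ r ^ 2 + d`, impossible as squares are `0` or `1` mod `4`
      have h4 : ((r ^ 2 + d : ℤ) : ZMod 4) = 0 :=
        (ZMod.intCast_zmod_eq_zero_iff_dvd _ 4).mpr ((mul_dvd_mul hp2 hp2).trans hpp)
      have hd : (d : ZMod 4) = 2 := by
        rw [← ZMod.natCast_mod, hd4]
        rfl
      push_cast [hd] at h4
      generalize (r : ZMod 4) = x at h4
      revert x
      decide
    · have hpr : p ∣ r :=
        (Int.prime_two.coprime_iff_not_dvd.mpr hp2).symm.dvd_of_dvd_mul_left hpr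
      have hrr : p * p ∣ r ^ 2 := sq r ▸ mul_dvd_mul hpr hpr
      have hpd : p * p ∣ (d : ℤ) := by simpa using dvd_sub hpp hrr
      exact hp.not_isUnit (Int.squarefree_natCast.mpr hsf p hpd)
  obtain ⟨e, f, hef⟩ := hcop
  refine ⟨e * Int.gcdA n (2 * r), e * Int.gcdB n (2 * r), f, ?_⟩
  rw [Int.gcd_eq_gcd_ab] at hef
  linear_combination hef

theorem _root_.IsPrimitiveIdeal.mul_conj_eq_span_idealNorm (hsf : Squarefree d)
    (hd4 : d % 4 = 2) {b : Ideal (ℤ√(-(d : ℤ)))} (hb : IsPrimitiveIdeal b) :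
    b * b.conj = span {(idealNorm b : ℤ√(-(d : ℤ)))} := by
  obtain ⟨r, hr⟩ := hb.exists_mem_iff_dvd_idealNorm
  obtain ⟨c, hc⟩ := dvd_sq_sub_of_mem_iff hr
  obtain ⟨u, v, w, huvw⟩ :=
    exists_bezout_of_squarefree hsf hd4 (show r ^ 2 + d = idealNorm b * c by linear_combination hc)
  exact mul_conj_eq_span_of_mem_iff hr hc huvw

theorem exists_span_mul_eq_span_mul (hsf : Squarefree d) (hd4 : d % 4 = 2)
    {a a₀ b : Ideal (ℤ√(-(d : ℤ)))} (ha₀ : IsPrimitiveIdeal a₀) (hb : IsPrimitiveIdeal b)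
    (ha₀a : SameIdealClass a a₀) (hba : SameIdealClass a b) {r₀ : ℤ}
    (hr₀ : ∀ z : ℤ√(-(d : ℤ)), z ∈ a₀ ↔ (idealNorm a₀ : ℤ) ∣ z.re - r₀ * z.im) :
    ∃ w : ℤ√(-(d : ℤ)), span {((idealNorm a₀ : ℤ) : ℤ√(-(d : ℤ)))} * b = span {w} * a₀ ∧
      0 ≤ w.im ∧ w.norm ≤ idealNorm b * idealNorm a₀ ∧
      (idealNorm a₀ : ℤ) ∣ w.re + r₀ * w.im := by
  have := isDomain_of_neg (d := -(d : ℤ)) (by omega)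
  have ha₀c := ha₀.mul_conj_eq_span_idealNorm hsf hd4
  obtain ⟨w, hw, him⟩ := exists_mul_conj_eq_span_of_sameIdealClass ha₀c ha₀a hba
  refine ⟨w, ?_, him, ?_, ?_⟩
  · calc span {((idealNorm a₀ : ℤ) : ℤ√(-(d : ℤ)))} * b = b * (a₀ * a₀.conj) := by
          rw [ha₀c, Int.cast_natCast]; ring
      _ = span {w} * a₀ := by rw [← hw]; ring
  · have := hb.idealNorm_pos (by omega)
    have := ha₀.idealNorm_pos (by omega)
    exact Int.le_of_dvd (by positivity)
      (norm_dvd_of_mul_conj_eq_span (hb.mul_conj_eq_span_idealNorm hsf hd4) ha₀c hw)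
  · have hw₀ : w ∈ a₀.conj := mul_le_right (hw ▸ mem_span_singleton_self w)
    simpa using (hr₀ _).mp (mem_conj.mp hw₀)

theorem mem_boxPointsModEq_of_norm_le {n : ℕ} (hd : 0 < d) {r : ℤ} {w : ℤ√(-(d : ℤ))}
    {M : ℝ} (him : 0 < w.im) (hM : (w.norm : ℝ) ≤ M) (hw : (n : ℤ) ∣ w.re + r * w.im) :
    w ∈ boxPointsModEq (-d) n r √(M / d) √M := by
  have hd' : (0 : ℝ) < d := by exact_mod_cast hd
  have hnorm : (w.re : ℝ) ^ 2 + d * (w.im : ℝ) ^ 2 ≤ M := by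
    rw [norm_def] at hM
    push_cast at hM
    linarith
  refine ⟨him, ?_, Real.abs_le_sqrt (by nlinarith), hw⟩
  refine (le_abs_self _).trans (Real.abs_le_sqrt ?_)
  rw [le_div_iff₀ hd']
  nlinarith

end

end Zsqrtd

/-- For a fixed squarefree `d ≡ 2 (mod 4)` and a fixed ideal class, the number of
primitive ideals `b` in that class with `N(b) ≤ Y√d` is `O(1 + Y)`, with an absolute
implied constant. -/
theorem count_primitive_in_class :
    ∃ C : ℝ, ∀ d : ℕ, Squarefree d → d % 4 = 2 →
      ∀ a : Ideal (ℤ√(-(d:ℤ))), a ≠ ⊥ → ∀ Y : ℝ, 0 < Y →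
      (Nat.card {b : Ideal (ℤ√(-(d:ℤ))) //
        IsPrimitiveIdeal b ∧ SameIdealClass a b ∧
        (idealNorm b : ℝ) ≤ Y * Real.sqrt d} : ℝ) ≤ C * (1 + Y) := by
  refine ⟨3, fun d hsf hd4 a _ Y hY => ?_⟩
  set T := {b : Ideal (ℤ√(-(d:ℤ))) //
    IsPrimitiveIdeal b ∧ SameIdealClass a b ∧ (idealNorm b : ℝ) ≤ Y * Real.sqrt d}
  rcases isEmpty_or_nonempty T with hT | ⟨a₀, ha₀, ha₀a, ha₀Y⟩
  · rw [Nat.card_of_isEmpty, Nat.cast_zero]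
    positivity
  have hd : 0 < d := by omega
  have := Zsqrtd.isDomain_of_neg (d := -(d : ℤ)) (by omega)
  have hn₀ := ha₀.idealNorm_pos (by omega)
  have hn₀' : (idealNorm a₀ : ℤ) ≠ 0 := by exact_mod_cast hn₀.ne'
  obtain ⟨r₀, hr₀⟩ := ha₀.exists_mem_iff_dvd_idealNorm
  choose W hW him hnorm hcong using fun b : T =>
    Zsqrtd.exists_span_mul_eq_span_mul hsf hd4 ha₀ b.2.1 ha₀a b.2.2.1 hr₀
  have hinj : Function.Injective W := fun b b' h =>
    Subtype.ext <| b.2.1.eq_of_span_intCast_mul_eq b'.2.1 hn₀' (by rw [hW, hW, h])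
  set M := Y * √d * idealNorm a₀
  set S := Zsqrtd.boxPointsModEq (-d) (idealNorm a₀) r₀ √(M / d) √M
  -- `W b` can only leave the box `S` by being real, and a real `W b` forces `b = a₀`
  have hS : ∀ b : T, W b ∉ S → b = ⟨a₀, ha₀, ha₀a, ha₀Y⟩ := fun b hb => by
    have hreal : (W b).im = 0 := by
      by_contra h
      have hnorm' : ((W b).norm : ℝ) ≤ idealNorm b.1 * idealNorm a₀ := by exact_mod_cast hnorm b
      exact hb (Zsqrtd.mem_boxPointsModEq_of_norm_le hd ((him b).lt_of_ne' h)
        (hnorm'.trans (mul_le_mul_of_nonneg_right b.2.2.2 (Nat.cast_nonneg _))) (hcong b))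
    refine Subtype.ext (b.2.1.eq_of_span_intCast_mul_eq (n := (W b).re) ha₀ hn₀' ?_)
    rw [hW]
    congr
    ext <;> simp [hreal]
  obtain ⟨hfin, hcard⟩ := Zsqrtd.boxPointsModEq_finite_and_ncard_le (d := -d)
    hn₀ r₀ (Real.sqrt_nonneg (M / d)) (Real.sqrt_nonneg M)
  have hcount : (Nat.card T : ℝ) ≤ S.ncard + 1 := by
    exact_mod_cast Nat.card_le_ncard_add_one_of_injective hinj hfin hS
  have := sqrt_div_mul_two_mul_sqrt_div_add_one_le (by exact_mod_cast hd)
    (by exact_mod_cast hn₀) ha₀Y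
  linarith
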